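/- arXiv:1802.01577 — 2 statements merged into one kernel-verified Lean document; each statement's English description precedes it below -/
import Mathlib

section
/- Let M be a compact connected metric measure space with μ(M)=1, diam M = 1, satisfying Ahlfors regularity (c₁⁻¹ r^d ≤ v(y,r) ≤ c₁ r^d for all y, r∈[0,1]) and Lipschitz volume continuity (|v(y,r₁) − v(y,r₂)| ≤ c₂|r₁ − r₂|). Suppose P_m = {P_j}_{j=1}^m is a partition of M into sets of measure 1/m with diam P_j ≤ c₈ m^{−1/d}. Then for every y ∈ M and r ∈ [0,1], the number K_m(y,r) of parts P_j meeting the sphere Σ(y,r) = {x : θ(x,y) = r} satisfies K_m(y,r) ≤ 4 c₂ c₈ m^{1 − 1/d}. -/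
open MeasureTheory Metric Set
open scoped Classical

/-- The volume of the metric ball `B(y,r)`, with the convention `v(y,r) = 1` for `r ≥ 1`
(since `diam M = 1`, `B(y,r) = M` for `r ≥ 1`); for `r ≤ 0` the ball is empty. -/
noncomputable def vol {M : Type*} [MetricSpace M] [MeasurableSpace M]
    (μ : MeasureTheory.Measure M) (y : M) (r : ℝ) : ℝ :=
  if 1 ≤ r then 1 else (μ (Metric.ball y r)).toReal

/-!
Write `δ = c₈ m^{-1/d}` for the diameter bound of the parts. A part meeting the sphere `Σ(y,r)`
lies in the annulus `B(y, r + 2δ) \ B(y, r - 2δ)`. These parts are disjoint of measure `1/m`, so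
`K_m(y,r) / m ≤ v(y, r + 2δ) - v(y, r - 2δ) ≤ 4 c₂ δ` by the Lipschitz condition, and
`4 c₂ δ m = 4 c₂ c₈ m^{1-1/d}`.
-/

theorem subset_ball_diff_ball_of_diam_le {X : Type*} [PseudoMetricSpace X] {s : Set X}
    {x y : X} {r δ : ℝ} (hs : Bornology.IsBounded s) (hδ : 0 < δ) (hdiam : diam s ≤ δ)
    (hx : x ∈ s) (hxr : dist x y = r) :
    s ⊆ ball y (r + 2 * δ) \ ball y (r - 2 * δ) := by
  intro z hz
  have hzx : dist z x ≤ δ := (dist_le_diam_of_mem hs hz hx).trans hdiam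
  have hzy := dist_triangle z x y
  have hxy := dist_triangle_left x y z
  simp only [mem_sdiff, mem_ball, not_lt]
  constructor <;> linarith

theorem card_mul_add_measureReal_le {α ι : Type*} [MeasurableSpace α] (μ : Measure α)
    [IsFiniteMeasure μ] {P : ι → Set α} {F : Finset ι} {a : ℝ} {s t : Set α}
    (hmeas : ∀ j ∈ F, MeasurableSet (P j)) (hdisj : (F : Set ι).PairwiseDisjoint P)
    (hsize : ∀ j ∈ F, μ.real (P j) = a) (hst : s ⊆ t) (hP : ∀ j ∈ F, P j ⊆ t \ s) :
    F.card * a + μ.real s ≤ μ.real t := by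
  have hU : MeasurableSet (⋃ j ∈ F, P j) := F.measurableSet_biUnion hmeas
  have hUs : Disjoint (⋃ j ∈ F, P j) s :=
    disjoint_iUnion₂_left.mpr fun j hj => (subset_sdiff.mp (hP j hj)).2
  calc F.card * a + μ.real s = μ.real (⋃ j ∈ F, P j) + μ.real s := by
        rw [measureReal_biUnion_finset hdisj hmeas, Finset.sum_congr rfl hsize]
        simp
    _ = μ.real ((⋃ j ∈ F, P j) ∪ s) := (measureReal_union' hUs hU (measure_ne_top μ _)).symm
    _ ≤ μ.real t := measureReal_mono <|
        union_subset (iUnion₂_subset fun j hj => (hP j hj).trans sdiff_subset) hst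

section BallVolume

variable {M : Type*} [MetricSpace M] [MeasurableSpace M] (μ : Measure M)

theorem measureReal_ball_le_vol [IsProbabilityMeasure μ] (y : M) (r : ℝ) :
    μ.real (ball y r) ≤ vol μ y r := by
  unfold vol
  split_ifs
  · exact measureReal_le_one
  · rfl

theorem vol_of_lt_one {y : M} {r : ℝ} (hr : r < 1) : vol μ y r = μ.real (ball y r) :=
  if_neg hr.not_ge

theorem card_mul_le_of_subset_ball_diff_ball [IsProbabilityMeasure μ] {ι : Type*}
    {P : ι → Set M} {F : Finset ι} {a c : ℝ} {y : M} {r₁ r₂ : ℝ}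
    (hlip : ∀ r r' : ℝ, |vol μ y r - vol μ y r'| ≤ c * |r - r'|) (hr : r₁ ≤ r₂) (hr₁ : r₁ < 1)
    (hmeas : ∀ j ∈ F, MeasurableSet (P j)) (hdisj : (F : Set ι).PairwiseDisjoint P)
    (hsize : ∀ j ∈ F, μ.real (P j) = a) (hP : ∀ j ∈ F, P j ⊆ ball y r₂ \ ball y r₁) :
    F.card * a ≤ c * (r₂ - r₁) := by
  have hparts := card_mul_add_measureReal_le μ hmeas hdisj hsize (ball_subset_ball hr) hP
  have hball₂ := measureReal_ball_le_vol μ y r₂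
  have hvol := (abs_le.mp (hlip r₂ r₁)).2
  rw [vol_of_lt_one μ hr₁, abs_of_nonneg (sub_nonneg.mpr hr)] at hvol
  linarith

end BallVolume

theorem stmt1_general {M : Type*} [MetricSpace M] [CompactSpace M]
    [MeasurableSpace M] (μ : Measure M) [IsProbabilityMeasure μ]
    (d c₂ c₈ : ℝ) (hc₈ : 0 < c₈)
    -- Condition B (Lipschitz continuity of the volume in the radius)
    (hB : ∀ y : M, ∀ r₁ r₂ : ℝ, |vol μ y r₁ - vol μ y r₂| ≤ c₂ * |r₁ - r₂|)
    (m : ℕ) (hm : 0 < m) (P : Fin m → Set M)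
    (hmeas : ∀ j, MeasurableSet (P j))
    (hdisj : Pairwise (Function.onFun Disjoint P))
    (hsize : ∀ j, μ (P j) = 1 / m)
    (hPdiam : ∀ j, Metric.diam (P j) ≤ c₈ * (m : ℝ) ^ (-(1:ℝ)/d))
    (y : M) (r : ℝ) (hr : r ∈ Set.Icc (0:ℝ) 1) :
    ((Finset.univ.filter fun j : Fin m =>
        ({x : M | dist x y = r} ∩ P j).Nonempty).card : ℝ)
      ≤ 4 * c₂ * c₈ * (m : ℝ) ^ (1 - 1/d) := by
  have hm' : (0 : ℝ) < m := by exact_mod_cast hm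
  set δ := c₈ * (m : ℝ) ^ (-(1:ℝ)/d) with hδ_def
  have hδ : 0 < δ := by positivity
  set F := Finset.univ.filter fun j : Fin m => ({x : M | dist x y = r} ∩ P j).Nonempty
  have hparts : ∀ j ∈ F, P j ⊆ ball y (r + 2 * δ) \ ball y (r - 2 * δ) := fun j hj => by
    obtain ⟨x, hxr, hxP⟩ := (Finset.mem_filter.mp hj).2
    exact subset_ball_diff_ball_of_diam_le isBounded_of_compactSpace hδ (hPdiam j) hxP hxr
  have hcard := card_mul_le_of_subset_ball_diff_ball μ (a := 1 / m) (hB y) (by linarith)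
    (by linarith [hr.2]) (fun j _ => hmeas j) (hdisj.set_pairwise _)
    (fun j _ => by simp [measureReal_def, hsize j]) hparts
  have hrpow : (m : ℝ) ^ (1 - 1/d) = m * (m : ℝ) ^ (-(1:ℝ)/d) := by
    rw [neg_div, sub_eq_add_neg, Real.rpow_add hm', Real.rpow_one]
  calc (F.card : ℝ) = F.card * (1 / m) * m := by field_simp
    _ ≤ c₂ * (r + 2 * δ - (r - 2 * δ)) * m := by gcongr
    _ = 4 * c₂ * c₈ * (m : ℝ) ^ (1 - 1/d) := by rw [hrpow, hδ_def]; ring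

/-- the number `K_m(y,r)` of parts of an equal-measure partition with small
diameters meeting the sphere `Σ(y,r)` is at most `4 c₂ c₈ m^{1-1/d}`. -/
theorem stmt1 {M : Type*} [MetricSpace M] [CompactSpace M] [ConnectedSpace M] [Nonempty M]
    [MeasurableSpace M] (μ : Measure M) [IsProbabilityMeasure μ]
    (hdiam : Metric.diam (Set.univ : Set M) = 1)
    (d c₁ c₂ c₈ : ℝ) (hd : 0 < d) (hc₁ : 0 < c₁) (hc₂ : 0 < c₂) (hc₈ : 0 < c₈)
    -- Condition A (Ahlfors regularity)
    (hA : ∀ y : M, ∀ r ∈ Set.Icc (0:ℝ) 1,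
      c₁⁻¹ * r ^ d ≤ vol μ y r ∧ vol μ y r ≤ c₁ * r ^ d)
    -- Condition B (Lipschitz continuity of the volume in the radius)
    (hB : ∀ y : M, ∀ r₁ r₂ : ℝ, |vol μ y r₁ - vol μ y r₂| ≤ c₂ * |r₁ - r₂|)
    (m : ℕ) (hm : 0 < m) (P : Fin m → Set M)
    (hmeas : ∀ j, MeasurableSet (P j))
    (hdisj : Pairwise (Function.onFun Disjoint P))
    (hcover : (⋃ j, P j) = Set.univ)
    (hsize : ∀ j, μ (P j) = 1 / m)
    (hPdiam : ∀ j, Metric.diam (P j) ≤ c₈ * (m : ℝ) ^ (-(1:ℝ)/d))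
    (y : M) (r : ℝ) (hr : r ∈ Set.Icc (0:ℝ) 1) :
    ((Finset.univ.filter fun j : Fin m =>
        ({x : M | dist x y = r} ∩ P j).Nonempty).card : ℝ)
      ≤ 4 * c₂ * c₈ * (m : ℝ) ^ (1 - 1/d) :=
  stmt1_general μ d c₂ c₈ hc₈ hB m hm P hmeas hdisj hsize hPdiam y r hr
end

section
/- (Proposition 1.2, a priori estimate) Let M satisfy the assumptions of Theorem 1.1, admitting equal-measure partitions into m parts of diameter ≤ c₈ m^{−1/d} for all m ≥ c₅. Then for any N-point set D_N ⊂ M, any p > 1, and any integer m ≥ c₅: L_∞[D_N] ≤ 2 m^{2/p} L_p[ξ₀, D_N] + c₄ N m^{−1/d}, where ξ₀ is Lebesgue measure on [0,1], L_∞[D_N] = sup_{y,r} |L[B(y,r), D_N]|, and c₄ = 4 c₂ c₈. -/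
/-!
Take the equal-measure partition into `m` pieces `P j` of diameter at most
`ε = c₈ m^{-1/d}`. Since `M` is connected, its diameter is at most the sum `m ε` of the
diameters of the pieces, so `1 ≤ m ε`.

Let `y ∈ P j`. Near the endpoints (`r < 2ε` when `L(y, r) ≤ 0`, `r > 1 - 2ε` when
`L(y, r) > 0`), Condition B alone gives `|L(y, r)| ≤ 2 c₂ ε N`. Otherwise choose the radius
window `[r - 2ε, r - ε]` (resp. `[r + ε, r + 2ε]`): for every `y' ∈ P j` and `r'` in it the
ball `B(y', r')` is contained in (resp. contains) `B(y, r)`, and Condition B bounds the change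
of volume, so `|L(y', r')| ≥ |L(y, r)| - 3 c₂ ε N` on the whole window. The window has
`μ ⊗ ξ₀`-measure `ε / m ≥ m⁻²`, so integrating `|L|^p` over it gives
`(|L(y, r)| - 3 c₂ ε N)^p ≤ m² L_p^p`.
-/

open MeasureTheory Metric Set

/-- The local discrepancy `L[B(y,r), D] = #(B(y,r) ∩ D) - N v(y,r)` of an `N`-point set. -/
noncomputable def locDisc {M : Type*} [MetricSpace M] [MeasurableSpace M]
    (μ : MeasureTheory.Measure M) {N : ℕ} (D : Fin N → M) (y : M) (r : ℝ) : ℝ :=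
  (∑ i : Fin N, (Metric.ball y r).indicator 1 (D i) : ℝ) - N * vol μ y r

section Counting

variable {α : Type*} {N : ℕ} (D : Fin N → α)

theorem sum_indicator_one_nonneg (s : Set α) : 0 ≤ ∑ i, s.indicator (1 : α → ℝ) (D i) :=
  Finset.sum_nonneg fun _ _ => indicator_nonneg (fun _ _ => zero_le_one) _

theorem sum_indicator_one_le (s : Set α) : ∑ i, s.indicator (1 : α → ℝ) (D i) ≤ N := by
  calc ∑ i, s.indicator (1 : α → ℝ) (D i) ≤ ∑ _i : Fin N, (1 : ℝ) :=
        Finset.sum_le_sum fun _ _ => indicator_apply_le' (fun _ => le_rfl) fun _ => zero_le_one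
    _ = N := by simp

theorem sum_indicator_one_mono {s t : Set α} (h : s ⊆ t) :
    ∑ i, s.indicator (1 : α → ℝ) (D i) ≤ ∑ i, t.indicator (1 : α → ℝ) (D i) :=
  Finset.sum_le_sum fun _ _ => indicator_le_indicator_apply_of_subset h zero_le_one

end Counting

theorem dist_le_card_mul_of_iUnion_eq_univ {M : Type*} [PseudoMetricSpace M] [BoundedSpace M]
    [PreconnectedSpace M] {ι : Type*} [Fintype ι] {P : ι → Set M} (hcover : ⋃ j, P j = univ)
    {ε : ℝ} (hdiam : ∀ j, diam (P j) ≤ ε) (x y : M) :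
    dist x y ≤ Fintype.card ι * ε := by
  have hf : LipschitzWith 1 (dist x) := LipschitzWith.dist_right x
  -- the range of `dist x` is an interval containing `[0, dist x y]`, covered by the `dist x '' P j`
  have hIcc : Icc 0 (dist x y) ⊆ range (dist x) :=
    (isPreconnected_range hf.continuous).Icc_subset ⟨x, dist_self x⟩ ⟨y, rfl⟩
  have hvol : ENNReal.ofReal (dist x y) ≤ Fintype.card ι * ENNReal.ofReal ε :=
    calc ENNReal.ofReal (dist x y) = volume (Icc 0 (dist x y)) := by simp
      _ ≤ volume (⋃ j, dist x '' P j) := by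
          rw [← image_iUnion, hcover, image_univ]; exact measure_mono hIcc
      _ ≤ ∑ j, volume (dist x '' P j) := measure_iUnion_fintype_le _ _
      _ ≤ ∑ _j : ι, ENNReal.ofReal ε := by
          gcongr with j
          calc volume (dist x '' P j) ≤ ediam (dist x '' P j) := Real.volume_le_diam _
            _ ≤ ediam (P j) := by simpa using hf.ediam_image_le (P j)
            _ ≤ ENNReal.ofReal ε := ediam_le_of_forall_dist_le fun a ha b hb =>
                (dist_le_diam_of_mem (Bornology.IsBounded.all _) ha hb).trans (hdiam j)
      _ = Fintype.card ι * ENNReal.ofReal ε := by simp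
  obtain ⟨j, -⟩ := iUnion_eq_univ_iff.mp hcover x
  have hmε : 0 ≤ Fintype.card ι * ε :=
    mul_nonneg (Nat.cast_nonneg _) (diam_nonneg.trans (hdiam j))
  rwa [← ENNReal.ofReal_natCast, ← ENNReal.ofReal_mul (Nat.cast_nonneg _),
    ENNReal.ofReal_le_ofReal_iff hmε] at hvol

theorem diam_univ_le_card_mul_of_iUnion_eq_univ {M : Type*} [PseudoMetricSpace M] [BoundedSpace M]
    [ConnectedSpace M] {ι : Type*} [Fintype ι] {P : ι → Set M} (hcover : ⋃ j, P j = univ)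
    {ε : ℝ} (hdiam : ∀ j, diam (P j) ≤ ε) :
    diam (univ : Set M) ≤ Fintype.card ι * ε :=
  let x : M := Classical.arbitrary M
  diam_le_of_forall_dist_le ((dist_self x).symm.trans_le
    (dist_le_card_mul_of_iUnion_eq_univ hcover hdiam x x)) fun a _ b _ =>
      dist_le_card_mul_of_iUnion_eq_univ hcover hdiam a b

theorem integral_integral_ge_of_le_on_prod {X Y : Type*} [MeasurableSpace X] [MeasurableSpace Y]
    {μ : Measure X} {ν : Measure Y} [IsFiniteMeasure μ] [IsFiniteMeasure ν] {F : X → Y → ℝ}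
    (hF : Measurable (Function.uncurry F)) (hF₀ : ∀ x y, 0 ≤ F x y) {K : ℝ}
    (hFK : ∀ x y, F x y ≤ K) {S : Set X} {T : Set Y} (hS : MeasurableSet S)
    (hT : MeasurableSet T) {c : ℝ} (hc : ∀ x ∈ S, ∀ y ∈ T, c ≤ F x y) :
    c * ν.real T * μ.real S ≤ ∫ x, ∫ y, F x y ∂ν ∂μ := by
  have hFint : ∀ x, Integrable (F x) ν := fun x =>
    Integrable.mono' (integrable_const K) (hF.comp measurable_prodMk_left).aestronglyMeasurable
      (ae_of_all _ fun y => by rw [Real.norm_of_nonneg (hF₀ x y)]; exact hFK x y)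
  have hg₀ : ∀ x, 0 ≤ ∫ y, F x y ∂ν := fun x => integral_nonneg (hF₀ x)
  have hgint : Integrable (fun x => ∫ y, F x y ∂ν) μ := by
    refine Integrable.mono' (integrable_const (K * ν.real univ))
      (hF.stronglyMeasurable.integral_prod_right' (f := Function.uncurry F)).aestronglyMeasurable
      (ae_of_all _ fun x => ?_)
    rw [Real.norm_of_nonneg (hg₀ x)]
    simpa [mul_comm] using integral_mono (hFint x) (integrable_const K) (hFK x)
  have hinner : ∀ x ∈ S, c * ν.real T ≤ ∫ y, F x y ∂ν := fun x hx =>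
    calc c * ν.real T ≤ ∫ y in T, F x y ∂ν :=
          setIntegral_ge_of_const_le_real hT (measure_ne_top ν T) (hc x hx) (hFint x).integrableOn
      _ ≤ ∫ y, F x y ∂ν := setIntegral_le_integral (hFint x) (ae_of_all _ (hF₀ x))
  calc c * ν.real T * μ.real S ≤ ∫ x in S, ∫ y, F x y ∂ν ∂μ :=
        setIntegral_ge_of_const_le_real hS (measure_ne_top μ S) hinner hgint.integrableOn
    _ ≤ ∫ x, ∫ y, F x y ∂ν ∂μ := setIntegral_le_integral hgint (ae_of_all _ hg₀)

section Volume

variable {M : Type*} [MetricSpace M] [MeasurableSpace M] (μ : Measure M)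

theorem vol_nonneg (y : M) (r : ℝ) : 0 ≤ vol μ y r := by
  unfold vol; split_ifs <;> positivity

theorem vol_zero (y : M) : vol μ y 0 = 0 := by
  simp [vol]

theorem vol_one (y : M) : vol μ y 1 = 1 := by
  simp [vol]

theorem measurable_vol [SFinite μ] [SecondCountableTopology M] [BorelSpace M] :
    Measurable fun q : M × ℝ => vol μ q.1 q.2 := by
  have hball : MeasurableSet {q : (M × ℝ) × M | dist q.2 q.1.1 < q.1.2} :=
    (isOpen_lt (continuous_snd.dist continuous_fst.fst) continuous_fst.snd).measurableSet
  exact Measurable.ite (measurableSet_le measurable_const measurable_snd) measurable_const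
    (measurable_measure_prodMk_left hball).ennreal_toReal

variable [IsProbabilityMeasure μ]

theorem vol_le_one (y : M) (r : ℝ) : vol μ y r ≤ 1 := by
  unfold vol; split_ifs
  · exact le_rfl
  · exact measureReal_le_one

theorem vol_le_vol_add_dist (y y' : M) (r : ℝ) : vol μ y' r ≤ vol μ y (r + dist y' y) := by
  unfold vol
  split_ifs with h₁ h₂ h₂
  · exact le_rfl
  · linarith [dist_nonneg (x := y') (y := y)]
  · exact measureReal_le_one
  · exact measureReal_mono (ball_subset_ball' le_rfl)

end Volume

section Discrepancy

variable {M : Type*} [MetricSpace M] [MeasurableSpace M] (μ : Measure M) {N : ℕ} (D : Fin N → M)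

theorem abs_locDisc_le [IsProbabilityMeasure μ] (y : M) (r : ℝ) : |locDisc μ D y r| ≤ N := by
  have h₀ := sum_indicator_one_nonneg D (ball y r)
  have h₁ := sum_indicator_one_le D (ball y r)
  have hv₀ := mul_nonneg (Nat.cast_nonneg N) (vol_nonneg μ y r)
  have hv₁ := mul_le_of_le_one_right (Nat.cast_nonneg N) (vol_le_one μ y r)
  rw [locDisc, abs_le]
  constructor <;> linarith

theorem measurable_locDisc [SFinite μ] [SecondCountableTopology M] [BorelSpace M] :
    Measurable fun q : M × ℝ => locDisc μ D q.1 q.2 := by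
  refine (Finset.measurable_sum _ fun i _ => ?_).sub (measurable_const.mul (measurable_vol μ))
  have hball : MeasurableSet {q : M × ℝ | dist (D i) q.1 < q.2} :=
    (isOpen_lt (continuous_const.dist continuous_fst) continuous_snd).measurableSet
  exact measurable_const.indicator hball

theorem neg_locDisc_le {c₂ : ℝ}
    (hB : ∀ y : M, ∀ r₁ r₂ : ℝ, |vol μ y r₁ - vol μ y r₂| ≤ c₂ * |r₁ - r₂|) (y : M) (r : ℝ) :
    -locDisc μ D y r ≤ N * (c₂ * |r|) := by
  have hv : vol μ y r ≤ c₂ * |r| := by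
    simpa [vol_zero, abs_of_nonneg (vol_nonneg μ y r)] using hB y r 0
  have := sum_indicator_one_nonneg D (ball y r)
  rw [locDisc]
  nlinarith [mul_le_mul_of_nonneg_left hv (Nat.cast_nonneg N)]

theorem locDisc_le_sub {c₂ : ℝ}
    (hB : ∀ y : M, ∀ r₁ r₂ : ℝ, |vol μ y r₁ - vol μ y r₂| ≤ c₂ * |r₁ - r₂|) (y : M) (r : ℝ) :
    locDisc μ D y r ≤ N * (c₂ * |1 - r|) := by
  have hv : 1 - vol μ y r ≤ c₂ * |1 - r| :=
    (le_abs_self _).trans (by simpa [vol_one] using hB y 1 r)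
  have := sum_indicator_one_le D (ball y r)
  rw [locDisc]
  nlinarith [mul_le_mul_of_nonneg_left hv (Nat.cast_nonneg N)]

theorem locDisc_le_locDisc_add [IsProbabilityMeasure μ] {c₂ : ℝ}
    (hB : ∀ y : M, ∀ r₁ r₂ : ℝ, |vol μ y r₁ - vol μ y r₂| ≤ c₂ * |r₁ - r₂|) {y₁ y₂ : M} {r₁ r₂ : ℝ}
    (h : r₁ + dist y₁ y₂ ≤ r₂) :
    locDisc μ D y₁ r₁ ≤ locDisc μ D y₂ r₂ + N * (c₂ * (r₂ + dist y₁ y₂ - r₁)) := by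
  have hcount := sum_indicator_one_mono D (ball_subset_ball' h)
  have hv : vol μ y₂ r₂ - vol μ y₁ r₁ ≤ c₂ * (r₂ + dist y₁ y₂ - r₁) := by
    calc vol μ y₂ r₂ - vol μ y₁ r₁ ≤ vol μ y₁ (r₂ + dist y₁ y₂) - vol μ y₁ r₁ := by
          gcongr; simpa [dist_comm] using vol_le_vol_add_dist μ y₁ y₂ r₂
      _ ≤ c₂ * |r₂ + dist y₁ y₂ - r₁| := (le_abs_self _).trans (hB _ _ _)
      _ = c₂ * (r₂ + dist y₁ y₂ - r₁) := by
          rw [abs_of_nonneg (by linarith [dist_nonneg (x := y₁) (y := y₂)])]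
  rw [locDisc, locDisc]
  nlinarith [mul_le_mul_of_nonneg_left hv (Nat.cast_nonneg N)]

end Discrepancy

/-- The paper's `L_p[ξ₀, D_N]`, with `ξ₀` the Lebesgue measure on `[0, 1]`. -/
noncomputable def lpDisc {M : Type*} [MetricSpace M] [MeasurableSpace M] (μ : Measure M) {N : ℕ}
    (D : Fin N → M) (p : ℝ) : ℝ :=
  (∫ y, (∫ r in Icc (0 : ℝ) 1, |locDisc μ D y r| ^ p) ∂μ) ^ (1 / p)

theorem integral_integral_rpow_abs_locDisc_nonneg {M : Type*} [MetricSpace M] [MeasurableSpace M]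
    (μ : Measure M) {N : ℕ} (D : Fin N → M) (p : ℝ) :
    0 ≤ ∫ y, (∫ r in Icc (0 : ℝ) 1, |locDisc μ D y r| ^ p) ∂μ :=
  integral_nonneg fun _ => setIntegral_nonneg measurableSet_Icc fun _ _ => by positivity

theorem lpDisc_nonneg {M : Type*} [MetricSpace M] [MeasurableSpace M] (μ : Measure M) {N : ℕ}
    (D : Fin N → M) (p : ℝ) : 0 ≤ lpDisc μ D p :=
  Real.rpow_nonneg (integral_integral_rpow_abs_locDisc_nonneg μ D p) _

section Window

variable {M : Type*} [MetricSpace M] [MeasurableSpace M] {μ : Measure M} [IsProbabilityMeasure μ]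
  {N : ℕ} (D : Fin N → M)

theorem abs_locDisc_le_or_exists_window {c₂ : ℝ}
    (hB : ∀ y : M, ∀ r₁ r₂ : ℝ, |vol μ y r₁ - vol μ y r₂| ≤ c₂ * |r₁ - r₂|) (hc₂ : 0 ≤ c₂)
    {ε : ℝ} (hε : 0 ≤ ε) {y : M} {r : ℝ} (hr : r ∈ Icc (0 : ℝ) 1) {S : Set M}
    (hS : ∀ y' ∈ S, dist y' y ≤ ε) :
    |locDisc μ D y r| ≤ N * (c₂ * (2 * ε)) ∨
      ∃ a, 0 ≤ a ∧ a + ε ≤ 1 ∧ ∀ y' ∈ S, ∀ r' ∈ Icc a (a + ε),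
        |locDisc μ D y r| - N * (c₂ * (3 * ε)) ≤ |locDisc μ D y' r'| := by
  obtain ⟨hr₀, hr₁⟩ := hr
  rcases le_or_gt (locDisc μ D y r) 0 with hL | hL
  · rw [abs_of_nonpos hL]
    rcases lt_or_ge r (2 * ε) with hr₂ | hr₂
    · left
      calc -locDisc μ D y r ≤ N * (c₂ * |r|) := neg_locDisc_le μ D hB y r
        _ ≤ N * (c₂ * (2 * ε)) := by rw [abs_of_nonneg hr₀]; gcongr
    · right
      refine ⟨r - 2 * ε, by linarith, by linarith, fun y' hy' r' hr' => ?_⟩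
      have hd := hS y' hy'
      have hcmp := locDisc_le_locDisc_add μ D hB (show r' + dist y' y ≤ r by linarith [hr'.2])
      have : N * (c₂ * (r + dist y' y - r')) ≤ N * (c₂ * (3 * ε)) := by
        gcongr; linarith [hr'.1]
      linarith [neg_le_abs (locDisc μ D y' r')]
  · rw [abs_of_pos hL]
    rcases lt_or_ge (1 - 2 * ε) r with hr₂ | hr₂
    · left
      calc locDisc μ D y r ≤ N * (c₂ * |1 - r|) := locDisc_le_sub μ D hB y r
        _ ≤ N * (c₂ * (2 * ε)) := by rw [abs_of_nonneg (by linarith)]; gcongr; linarith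
    · right
      refine ⟨r + ε, by linarith, by linarith, fun y' hy' r' hr' => ?_⟩
      have hd : dist y y' ≤ ε := dist_comm y y' ▸ hS y' hy'
      have hcmp := locDisc_le_locDisc_add μ D hB (show r + dist y y' ≤ r' by linarith [hr'.1])
      have : N * (c₂ * (r' + dist y y' - r)) ≤ N * (c₂ * (3 * ε)) := by
        gcongr; linarith [hr'.2]
      linarith [le_abs_self (locDisc μ D y' r')]

theorem le_of_le_abs_locDisc_on_window [SecondCountableTopology M] [BorelSpace M] {p : ℝ}
    (hp : 0 < p) {m : ℕ} {ε a c : ℝ} {S : Set M} (hS : MeasurableSet S) (hμS : μ S = 1 / m)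
    (hmε : 1 ≤ m * ε) (ha : 0 ≤ a) (ha' : a + ε ≤ 1)
    (hc : ∀ y ∈ S, ∀ r ∈ Icc a (a + ε), c ≤ |locDisc μ D y r|) :
    c ≤ (m : ℝ) ^ (2 / p) * lpDisc μ D p := by
  rcases le_or_gt c 0 with hc₀ | hc₀
  · exact hc₀.trans (mul_nonneg (by positivity) (lpDisc_nonneg μ D p))
  set A := ∫ y, (∫ r in Icc (0 : ℝ) 1, |locDisc μ D y r| ^ p) ∂μ
  have hA₀ : 0 ≤ A := integral_integral_rpow_abs_locDisc_nonneg μ D p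
  have hm : (0 : ℝ) < m := Nat.cast_pos.mpr (Nat.pos_of_ne_zero fun h => by norm_num [h] at hmε)
  have hε : 0 ≤ ε := nonneg_of_mul_nonneg_right (zero_le_one.trans hmε) hm
  have hwindow : c ^ p * ε * (1 / m) ≤ A := by
    have := integral_integral_ge_of_le_on_prod (μ := μ) (ν := volume.restrict (Icc (0 : ℝ) 1))
      (F := fun y r => |locDisc μ D y r| ^ p) ((measurable_locDisc μ D).abs.pow_const p)
      (fun _ _ => by positivity)
      (fun y r => Real.rpow_le_rpow (abs_nonneg _) (abs_locDisc_le μ D y r) hp.le)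
      hS measurableSet_Icc (fun y hy r hr => Real.rpow_le_rpow hc₀.le (hc y hy r hr) hp.le)
    have hT : (volume.restrict (Icc (0 : ℝ) 1)).real (Icc a (a + ε)) = ε := by
      rw [measureReal_restrict_apply measurableSet_Icc,
        inter_eq_left.mpr (Icc_subset_Icc ha ha'), Real.volume_real_Icc]
      simp [hε]
    have hS' : μ.real S = 1 / m := by simp [measureReal_def, hμS]
    rwa [hT, hS'] at this
  have hcp : c ^ p ≤ m ^ 2 * A :=
    calc c ^ p ≤ c ^ p * (m * ε) := le_mul_of_one_le_right (by positivity) hmε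
      _ = m ^ 2 * (c ^ p * ε * (1 / m)) := by field_simp
      _ ≤ m ^ 2 * A := by gcongr
  calc c = (c ^ p) ^ (1 / p) := by rw [one_div, Real.rpow_rpow_inv hc₀.le hp.ne']
    _ ≤ (m ^ 2 * A) ^ (1 / p) := by gcongr
    _ = m ^ (2 / p) * A ^ (1 / p) := by
      rw [Real.mul_rpow (by positivity) hA₀, ← Real.rpow_natCast_mul hm.le]
      norm_num [div_eq_mul_inv]

end Window

theorem stmt10_general {M : Type*} [MetricSpace M] [CompactSpace M] [ConnectedSpace M]
    [MeasurableSpace M] [BorelSpace M] (μ : Measure M) [IsProbabilityMeasure μ]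
    (hdiam : Metric.diam (Set.univ : Set M) = 1)
    (d c₂ c₈ : ℝ) (hc₂ : 0 < c₂)
    (hB : ∀ y : M, ∀ r₁ r₂ : ℝ, |vol μ y r₁ - vol μ y r₂| ≤ c₂ * |r₁ - r₂|)
    (c₅ : ℕ)
    (hpart : ∀ m : ℕ, c₅ ≤ m → ∃ P : Fin m → Set M,
      (∀ j, MeasurableSet (P j)) ∧ Pairwise (Function.onFun Disjoint P) ∧
      (⋃ j, P j) = Set.univ ∧ (∀ j, μ (P j) = 1 / m) ∧
      (∀ j, Metric.diam (P j) ≤ c₈ * (m : ℝ) ^ (-(1:ℝ)/d)))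
    (N : ℕ) (D : Fin N → M) (p : ℝ) (hp : 1 < p) (m : ℕ) (hm : c₅ ≤ m) :
    ∀ y : M, ∀ r ∈ Set.Icc (0:ℝ) 1,
      |locDisc μ D y r|
        ≤ 2 * (m : ℝ) ^ (2/p) *
            (∫ y', (∫ r' in Set.Icc (0:ℝ) 1, |locDisc μ D y' r'| ^ p) ∂μ) ^ (1/p)
          + 4 * c₂ * c₈ * N * (m : ℝ) ^ (-(1:ℝ)/d) := by
  intro y r hr
  change _ ≤ 2 * (m : ℝ) ^ (2 / p) * lpDisc μ D p + _
  obtain ⟨P, hPmeas, -, hPcover, hPvol, hPdiam⟩ := hpart m hm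
  set ε := c₈ * (m : ℝ) ^ (-(1:ℝ)/d)
  have hmε : 1 ≤ m * ε := by
    simpa [hdiam] using diam_univ_le_card_mul_of_iUnion_eq_univ hPcover hPdiam
  obtain ⟨j, hyj⟩ := iUnion_eq_univ_iff.mp hPcover y
  have hε : 0 ≤ ε := diam_nonneg.trans (hPdiam j)
  have hclose : ∀ y' ∈ P j, dist y' y ≤ ε := fun y' hy' =>
    (dist_le_diam_of_mem (Bornology.IsBounded.all _) hy' hyj).trans (hPdiam j)
  have hB₀ : 0 ≤ (m : ℝ) ^ (2 / p) * lpDisc μ D p :=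
    mul_nonneg (by positivity) (lpDisc_nonneg μ D p)
  have hN : 0 ≤ N * (c₂ * ε) := mul_nonneg (Nat.cast_nonneg N) (mul_nonneg hc₂.le hε)
  have herr : 4 * c₂ * c₈ * N * (m : ℝ) ^ (-(1:ℝ)/d) = 4 * (N * (c₂ * ε)) := by ring
  rcases abs_locDisc_le_or_exists_window D hB hc₂.le hε hr hclose with hsmall | ⟨a, ha, ha', hwin⟩
  · linarith
  · have := le_of_le_abs_locDisc_on_window D (zero_lt_one.trans hp) (hPmeas j) (hPvol j) hmε
      ha ha' hwin
    linarith

/-- Proposition 1.2, a priori estimate: for any `N`-point set `D_N`,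
`L_∞[D_N] ≤ 2 m^{2/p} L_p[ξ₀, D_N] + c₄ N m^{-1/d}` with `c₄ = 4 c₂ c₈`, for every
`p > 1` and integer `m ≥ c₅`. -/
theorem stmt10 {M : Type*} [MetricSpace M] [CompactSpace M] [ConnectedSpace M] [Nonempty M]
    [MeasurableSpace M] [BorelSpace M] (μ : Measure M) [IsProbabilityMeasure μ]
    (hdiam : Metric.diam (Set.univ : Set M) = 1)
    (d c₁ c₂ c₈ : ℝ) (hd : 0 < d) (hc₁ : 0 < c₁) (hc₂ : 0 < c₂) (hc₈ : 0 < c₈)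
    (hA : ∀ y : M, ∀ r ∈ Set.Icc (0:ℝ) 1,
      c₁⁻¹ * r ^ d ≤ vol μ y r ∧ vol μ y r ≤ c₁ * r ^ d)
    (hB : ∀ y : M, ∀ r₁ r₂ : ℝ, |vol μ y r₁ - vol μ y r₂| ≤ c₂ * |r₁ - r₂|)
    (c₅ : ℕ)
    (hpart : ∀ m : ℕ, c₅ ≤ m → ∃ P : Fin m → Set M,
      (∀ j, MeasurableSet (P j)) ∧ Pairwise (Function.onFun Disjoint P) ∧
      (⋃ j, P j) = Set.univ ∧ (∀ j, μ (P j) = 1 / m) ∧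
      (∀ j, Metric.diam (P j) ≤ c₈ * (m : ℝ) ^ (-(1:ℝ)/d)))
    (N : ℕ) (D : Fin N → M) (p : ℝ) (hp : 1 < p) (m : ℕ) (hm : c₅ ≤ m) (hm0 : 0 < m) :
    ∀ y : M, ∀ r ∈ Set.Icc (0:ℝ) 1,
      |locDisc μ D y r|
        ≤ 2 * (m : ℝ) ^ (2/p) *
            (∫ y', (∫ r' in Set.Icc (0:ℝ) 1, |locDisc μ D y' r'| ^ p) ∂μ) ^ (1/p)
          + 4 * c₂ * c₈ * N * (m : ℝ) ^ (-(1:ℝ)/d) :=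
  stmt10_general μ hdiam d c₂ c₈ hc₂ hB c₅ hpart N D p hp m hm
end
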